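/- Let ω be an infinite string over {b,c,d} that is not eventually constant. Then for each n ≥ 0 there exists a nontrivial element t of the rigid stabilizer Rist(1^n) ∩ 𝔾_ω whose word length with respect to the generators (a, b_0, c_0, d_0) is at most 2^{n+2}. -/

import Mathlib

/-- The automorphism `a` of the rooted binary tree `{0,1}*` flipping the first bit. -/
def aFun : List Bool → List Bool
  | [] => []
  | x :: s => (!x) :: s

lemma aFun_invol : Function.Involutive aFun := by
  intro s; cases s <;> simp [aFun]

def aPerm : Equiv.Perm (List Bool) := aFun_invol.toPerm

/-- The alphabet `{b, c, d}` of defining strings of generalized Grigorchuk groups. -/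
inductive GLetter : Type
  | b | c | d
deriving DecidableEq

/-- The action of the generator `x_n` of `𝔾_ω`: it fixes `1^m` and sends
`1^m 0 s` to itself if `ω_{n+m} = x`, and to `1^m 0 a(s)` otherwise. -/
def xFun (ω : ℕ → GLetter) (x : GLetter) : ℕ → List Bool → List Bool
  | _, [] => []
  | n, true :: s => true :: xFun ω x (n + 1) s
  | n, false :: s => false :: (if ω n = x then s else aFun s)

lemma xFun_invol (ω : ℕ → GLetter) (x : GLetter) (n : ℕ) :
    Function.Involutive (xFun ω x n) := by
  intro s
  induction s generalizing n with
  | nil => rfl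
  | cons hd t ih =>
    cases hd
    · by_cases h : ω n = x <;> simp [xFun, h, aFun_invol t]
    · simp [xFun, ih]

def xPerm (ω : ℕ → GLetter) (x : GLetter) (n : ℕ) : Equiv.Perm (List Bool) :=
  (xFun_invol ω x n).toPerm

/-- The generalized Grigorchuk group `𝔾_ω = ⟨a, b₀, c₀, d₀⟩`. -/
def Grig (ω : ℕ → GLetter) : Subgroup (Equiv.Perm (List Bool)) :=
  Subgroup.closure {aPerm, xPerm ω GLetter.b 0, xPerm ω GLetter.c 0, xPerm ω GLetter.d 0}

/-!
Substituting `a ↦ a ζₖ a` in a word over the generators of level `k + 1` gives a word over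
the generators of level `k` whose section at `1` is the element of the original word, provided
`ζₖ ≠ ωₖ`. Iterating this from the word `x a` of level `n`, with `x = ω_{n-1}`, produces an
element `g` of length `2^{n+1}` whose section at `1ⁿ` is `xₙ a` and whose section at each `1ᵏ0`
is an involution, once the letters `ζₖ` are chosen suitably. Hence `t = g²` fixes everything
outside `1ⁿ`, and it is nontrivial because `(xₙ a)² ≠ 1` as soon as `ω` takes a value other
than `x` after `n`.
-/

open Equiv

namespace GeneralizedGrigorchuk

@[simp] lemma aPerm_apply (u : List Bool) : aPerm u = aFun u := rfl

@[simp] lemma xPerm_apply (ω : ℕ → GLetter) (x : GLetter) (k : ℕ) (u : List Bool) :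
    xPerm ω x k u = xFun ω x k u := rfl

lemma aPerm_sq : aPerm ^ 2 = 1 := by
  ext u; simp [sq, aFun_invol u]

lemma xPerm_sq (ω : ℕ → GLetter) (x : GLetter) (k : ℕ) : xPerm ω x k ^ 2 = 1 := by
  ext u; simp [sq, xFun_invol ω x k u]

lemma aPerm_inv : aPerm⁻¹ = aPerm :=
  inv_eq_of_mul_eq_one_right (sq aPerm ▸ aPerm_sq)

lemma aPerm_ne_one : aPerm ≠ 1 := fun h => by
  simpa [aFun] using Perm.congr_fun h [false]

def pairFun (p q : Perm (List Bool)) : List Bool → List Bool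
  | [] => []
  | false :: s => false :: p s
  | true :: s => true :: q s

/-- The automorphism written `(p, q)` in wreath recursion notation. -/
def pairPerm (p q : Perm (List Bool)) : Perm (List Bool) where
  toFun := pairFun p q
  invFun := pairFun p⁻¹ q⁻¹
  left_inv := by rintro (_ | ⟨_ | _, s⟩) <;> simp [pairFun]
  right_inv := by rintro (_ | ⟨_ | _, s⟩) <;> simp [pairFun]

section pairPerm

variable (p q p' q' : Perm (List Bool))

@[simp] lemma pairPerm_nil : pairPerm p q [] = [] := rfl
@[simp] lemma pairPerm_false (s : List Bool) : pairPerm p q (false :: s) = false :: p s := rfl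
@[simp] lemma pairPerm_true (s : List Bool) : pairPerm p q (true :: s) = true :: q s := rfl

lemma pairPerm_mul : pairPerm p q * pairPerm p' q' = pairPerm (p * p') (q * q') := by
  ext (_ | ⟨_ | _, s⟩) <;> simp

lemma pairPerm_one : pairPerm 1 1 = 1 := by
  ext (_ | ⟨_ | _, s⟩) <;> simp

lemma pairPerm_pow (N : ℕ) : pairPerm p q ^ N = pairPerm (p ^ N) (q ^ N) := by
  induction N with
  | zero => simp [pairPerm_one]
  | succ N ih => rw [pow_succ, ih, pairPerm_mul, pow_succ, pow_succ]

lemma pairPerm_eq_one_iff {p q : Perm (List Bool)} : pairPerm p q = 1 ↔ p = 1 ∧ q = 1 := by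
  refine ⟨fun h => ⟨Perm.ext fun s => ?_, Perm.ext fun s => ?_⟩, ?_⟩
  · simpa using Perm.congr_fun h (false :: s)
  · simpa using Perm.congr_fun h (true :: s)
  · rintro ⟨rfl, rfl⟩
    exact pairPerm_one

lemma prod_map_pairPerm {α : Type*} (f g : α → Perm (List Bool)) (w : List α) :
    (w.map fun s => pairPerm (f s) (g s)).prod = pairPerm (w.map f).prod (w.map g).prod := by
  induction w with
  | nil => exact pairPerm_one.symm
  | cons s w ih => simp [ih, pairPerm_mul]

lemma aPerm_mul_pairPerm_mul_aPerm : aPerm * pairPerm p q * aPerm = pairPerm q p := by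
  ext (_ | ⟨_ | _, s⟩) <;> simp [aFun]

lemma pairPerm_ne_aPerm : pairPerm p q ≠ aPerm := fun h => by
  simpa [aFun] using Perm.congr_fun h [false]

end pairPerm

def xLeft (ω : ℕ → GLetter) (k : ℕ) (x : GLetter) : Perm (List Bool) :=
  if ω k = x then 1 else aPerm

section xPerm

variable (ω : ℕ → GLetter) (x : GLetter)

lemma xLeft_sq (k : ℕ) : xLeft ω k x ^ 2 = 1 := by
  unfold xLeft; split_ifs <;> simp [aPerm_sq]

lemma xLeft_mem_zpowers (k : ℕ) : xLeft ω k x ∈ Subgroup.zpowers aPerm := by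
  unfold xLeft; split_ifs
  · exact one_mem _
  · exact Subgroup.mem_zpowers _

lemma xPerm_eq_pairPerm (k : ℕ) : xPerm ω x k = pairPerm (xLeft ω k x) (xPerm ω x (k + 1)) := by
  ext (_ | ⟨_ | _, s⟩)
  · rfl
  · by_cases h : ω k = x <;> simp [xLeft, xFun, h]
  · rfl

lemma xPerm_ne_one {m d : ℕ} (h : ω (m + d) ≠ x) : xPerm ω x m ≠ 1 := by
  induction d generalizing m with
  | zero =>
    rw [xPerm_eq_pairPerm, Ne, pairPerm_eq_one_iff, xLeft, if_neg (by simpa using h)]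
    exact fun h' => aPerm_ne_one h'.1
  | succ d ih =>
    rw [xPerm_eq_pairPerm, Ne, pairPerm_eq_one_iff, not_and_or]
    exact Or.inr (ih (by rwa [Nat.add_right_comm, Nat.add_assoc]))

lemma aPerm_mul_xPerm_sq (m : ℕ) : (aPerm * xPerm ω x m) ^ 2 =
    pairPerm (xPerm ω x (m + 1) * xLeft ω m x) (xLeft ω m x * xPerm ω x (m + 1)) := by
  rw [sq, ← mul_assoc, xPerm_eq_pairPerm ω x m, aPerm_mul_pairPerm_mul_aPerm, pairPerm_mul]

lemma xPerm_mul_aPerm_sq_ne_one {m : ℕ} (h : ∃ m', m < m' ∧ ω m' ≠ x) :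
    (xPerm ω x m * aPerm) ^ 2 ≠ 1 := by
  obtain ⟨m', hm', hne⟩ := h
  rw [sq, mul_assoc, ← mul_assoc aPerm, xPerm_eq_pairPerm ω x m, aPerm_mul_pairPerm_mul_aPerm,
    pairPerm_mul, Ne, pairPerm_eq_one_iff, not_and_or]
  refine Or.inl fun h => ?_
  have hx : xPerm ω x (m + 1) = xLeft ω m x := by
    rw [← inv_eq_of_mul_eq_one_right h,
      inv_eq_of_mul_eq_one_right (by rw [← sq]; exact xLeft_sq ω x m)]
  unfold xLeft at hx
  split_ifs at hx
  · exact xPerm_ne_one ω x (d := m' - (m + 1)) (by rwa [Nat.add_sub_cancel' hm']) hx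
  · exact pairPerm_ne_aPerm _ _ (xPerm_eq_pairPerm ω x (m + 1) ▸ hx)

lemma aPerm_mul_xPerm_pow_four {m : ℕ} (h : ω m = x) : (aPerm * xPerm ω x m) ^ 4 = 1 := by
  rw [show 4 = 2 * 2 from rfl, pow_mul, aPerm_mul_xPerm_sq, pairPerm_pow, xLeft, if_pos h,
    mul_one, one_mul, xPerm_sq, pairPerm_one]

/-- `(a xₘ)² = (xₘ₊₁ a, a xₘ₊₁)` while `ωₘ ≠ x`, so the order doubles until `ω` hits `x`. -/
lemma aPerm_mul_xPerm_pow_two_pow {m r : ℕ} (h : ω (m + r) = x) :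
    (aPerm * xPerm ω x m) ^ 2 ^ (r + 2) = 1 := by
  induction r generalizing m with
  | zero => exact aPerm_mul_xPerm_pow_four ω x h
  | succ r ih =>
    by_cases hm : ω m = x
    · rw [show r + 1 + 2 = 2 + (r + 1) by omega, pow_add, pow_mul, show 2 ^ 2 = 4 from rfl,
        aPerm_mul_xPerm_pow_four ω x hm, one_pow]
    · have ih' := ih (m := m + 1) (by rwa [Nat.add_right_comm, Nat.add_assoc])
      rw [pow_succ', pow_mul, aPerm_mul_xPerm_sq, pairPerm_pow, xLeft, if_neg hm,
        pairPerm_eq_one_iff.mpr ⟨?_, ih'⟩]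
      rw [show xPerm ω x (m + 1) * aPerm = aPerm * (aPerm * xPerm ω x (m + 1)) * aPerm⁻¹ by
        rw [aPerm_inv, ← mul_assoc, ← sq, aPerm_sq, one_mul],
        conj_pow, ih', mul_one, mul_inv_cancel]

end xPerm

inductive Gen : Type
  | a : Gen
  | x : GLetter → Gen

def Gen.interp {G : Type*} (g : G) (c : GLetter → G) : Gen → G
  | .a => g
  | .x l => c l

def Gen.subst (z : GLetter) : Gen → List Gen
  | .a => [.a, .x z, .a]
  | .x l => [.x l]

def liftWord (z : GLetter) (w : List Gen) : List Gen := w.flatMap (Gen.subst z)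

lemma prod_map_liftWord {G : Type*} [Monoid G] (g : G) (c : GLetter → G) (z : GLetter)
    (w : List Gen) :
    ((liftWord z w).map (Gen.interp g c)).prod = (w.map (Gen.interp (g * c z * g) c)).prod := by
  induction w with
  | nil => rfl
  | cons s w ih =>
    cases s <;> simp_all [liftWord, Gen.subst, Gen.interp, mul_assoc]

def zimin (ζ : ℕ → GLetter) : ℕ → List Gen
  | 0 => [.a]
  | i + 1 => zimin ζ i ++ .x (ζ i) :: zimin ζ i

lemma length_zimin (ζ : ℕ → GLetter) (i : ℕ) : (zimin ζ i).length + 1 = 2 ^ (i + 1) := by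
  induction i with
  | zero => rfl
  | succ i ih => simp only [zimin, List.length_append, List.length_cons]; omega

lemma liftWord_zimin (ζ : ℕ → GLetter) (i : ℕ) :
    liftWord (ζ 0) (zimin (fun j => ζ (j + 1)) i) = zimin ζ (i + 1) := by
  induction i with
  | zero => rfl
  | succ i ih =>
    rw [zimin, liftWord, List.flatMap_append, List.flatMap_cons, ← liftWord, ih]
    rfl

lemma sq_eq_one_of_mem_zpowers {G : Type*} [Group G] {a g : G} (ha : a ^ 2 = 1)
    (hg : g ∈ Subgroup.zpowers a) : g ^ 2 = 1 := by
  obtain ⟨m, rfl⟩ := Subgroup.mem_zpowers_iff.mp hg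
  rw [← zpow_natCast, ← zpow_mul, mul_comm, zpow_mul, zpow_natCast, ha, one_zpow]

section ziminProd

variable {G : Type*} [Group G] (g : G) (c : GLetter → G) (ζ : ℕ → GLetter)

lemma prod_zimin_succ (i : ℕ) :
    ((zimin ζ (i + 1)).map (Gen.interp g c)).prod =
      ((zimin ζ i).map (Gen.interp g c)).prod * c (ζ i) *
        ((zimin ζ i).map (Gen.interp g c)).prod := by
  simp [zimin, Gen.interp, mul_assoc]

lemma prod_zimin_sq (hg : g ^ 2 = 1) (hc : ∀ l, c l ^ 2 = 1) (i : ℕ) :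
    ((zimin ζ i).map (Gen.interp g c)).prod ^ 2 = 1 := by
  induction i with
  | zero => simpa [zimin, Gen.interp] using hg
  | succ i ih =>
    rw [prod_zimin_succ]
    set E := ((zimin ζ i).map (Gen.interp g c)).prod
    calc (E * c (ζ i) * E) ^ 2 = E * c (ζ i) * E ^ 2 * c (ζ i) * E := by
          simp only [sq, mul_assoc]
      _ = 1 := by rw [ih, mul_one, mul_assoc E, ← sq, hc, mul_one, ← sq, ih]

/-- Reading `ζⱼ` as `1` makes `zimin ζ (j + 1)` evaluate to the square of an involution. -/
lemma prod_zimin_mem (H : Subgroup G) (hg : g ^ 2 = 1) (hc : ∀ l, c l ^ 2 = 1)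
    (hcH : ∀ l, c l ∈ H) {i j : ℕ} (hj : j < i) (hζj : c (ζ j) = 1) :
    ((zimin ζ i).map (Gen.interp g c)).prod ∈ H := by
  induction i with
  | zero => omega
  | succ i ih =>
    rw [prod_zimin_succ]
    rcases (Nat.lt_succ_iff_lt_or_eq.mp hj) with hj | rfl
    · exact H.mul_mem (H.mul_mem (ih hj) (hcH _)) (ih hj)
    · rw [hζj, mul_one, ← sq, prod_zimin_sq g c ζ hg hc]
      exact H.one_mem

lemma mul_prod_zimin (a : G) {i : ℕ} (h : ∀ j < i, c (ζ j) = a) :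
    a * ((zimin ζ i).map (Gen.interp g c)).prod = (a * g) ^ 2 ^ i := by
  induction i with
  | zero => simp [zimin, Gen.interp]
  | succ i ih =>
    rw [prod_zimin_succ, h i (by omega), pow_succ, pow_mul, ← ih fun j hj => h j (by omega)]
    simp only [sq, mul_assoc]

end ziminProd

def rist (v : List Bool) : Subgroup (Perm (List Bool)) where
  carrier := {g | ∀ u, ¬ v <+: u → g u = u}
  mul_mem' hg hh u hu := by rw [Perm.mul_apply, hh u hu, hg u hu]
  one_mem' _ _ := rfl
  inv_mem' hg u hu := by rw [Perm.inv_eq_iff_eq, hg u hu]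

lemma pairPerm_one_mem_rist {t : Perm (List Bool)} {v : List Bool} (ht : t ∈ rist v) :
    pairPerm 1 t ∈ rist (true :: v) := by
  rintro (_ | ⟨_ | _, s⟩) hu
  · rfl
  · rfl
  · rw [pairPerm_true, ht s (by simpa using hu)]

def genPerm (ω : ℕ → GLetter) (k : ℕ) : Gen → Perm (List Bool) :=
  Gen.interp aPerm fun l => xPerm ω l k

lemma genPerm_zero_mem (ω : ℕ → GLetter) (s : Gen) :
    genPerm ω 0 s ∈ ({aPerm, xPerm ω GLetter.b 0, xPerm ω GLetter.c 0,
      xPerm ω GLetter.d 0} : Set (Perm (List Bool))) := by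
  rcases s with _ | (_ | _ | _) <;> simp [genPerm, Gen.interp]

/-- Since `z ≠ ωₖ`, the substituted `a zₖ a` is `(zₖ₊₁, a)`. -/
lemma prod_map_genPerm_liftWord (ω : ℕ → GLetter) {k : ℕ} {z : GLetter} (hz : z ≠ ω k)
    (w : List Gen) : ((liftWord z w).map (genPerm ω k)).prod =
      pairPerm (w.map (Gen.interp (xPerm ω z (k + 1)) (xLeft ω k))).prod
        (w.map (genPerm ω (k + 1))).prod := by
  rw [genPerm, prod_map_liftWord, ← prod_map_pairPerm]
  congr 2
  funext s
  cases s with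
  | a => rw [Gen.interp, Gen.interp, xPerm_eq_pairPerm ω z k, aPerm_mul_pairPerm_mul_aPerm,
      xLeft, if_neg hz.symm, genPerm, Gen.interp]
  | x l => exact xPerm_eq_pairPerm ω l k

section tower

variable (ω ζ : ℕ → GLetter) (X : GLetter)

def towerElt (k i : ℕ) : Perm (List Bool) :=
  ((Gen.x X :: zimin (fun j => ζ (k + j)) i).map (genPerm ω k)).prod

def towerLeft (k i : ℕ) : Perm (List Bool) :=
  ((Gen.x X :: zimin (fun j => ζ (k + 1 + j)) i).map
    (Gen.interp (xPerm ω (ζ k) (k + 1)) (xLeft ω k))).prod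

lemma towerElt_succ {k : ℕ} (hζ : ζ k ≠ ω k) (i : ℕ) :
    towerElt ω ζ X k (i + 1) = pairPerm (towerLeft ω ζ X k i) (towerElt ω ζ X (k + 1) i) := by
  have hshift : (fun j => ζ (k + 1 + j)) = fun j => ζ (k + (j + 1)) :=
    funext fun j => congrArg ζ (by omega)
  have hlift : Gen.x X :: zimin (fun j => ζ (k + j)) (i + 1) =
      liftWord (ζ k) (Gen.x X :: zimin (fun j => ζ (k + 1 + j)) i) := by
    rw [← liftWord_zimin, hshift]
    rfl
  rw [towerElt, hlift, prod_map_genPerm_liftWord ω hζ]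
  rfl

def AdmissibleLetter (n k : ℕ) (z : GLetter) : Prop :=
  z ≠ ω k ∧ (ω k = X ∨ ∃ j, k < j ∧ j < n ∧ ω j = z)

/-- The `0`-section is `xLeft X · E` for a Zimin product `E`. Either `ωₖ = X` and `E` is an
involution; or a later `ζ` equals `ωₖ` and everything lies in `⟨a⟩`; or else
`a E = (a zₖ₊₁)^{2^i}`, and admissibility bounds the order of `a zₖ₊₁` by `2^{i+1}`. -/
lemma towerLeft_sq {k i : ℕ} (h : AdmissibleLetter ω X (k + i + 1) k (ζ k)) :
    towerLeft ω ζ X k i ^ 2 = 1 := by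
  have hz := xPerm_sq ω (ζ k) (k + 1)
  have hc := fun l => xLeft_sq ω l k
  rw [towerLeft, List.map_cons, List.prod_cons, Gen.interp]
  by_cases hX : ω k = X
  · rw [xLeft, if_pos hX, one_mul]
    exact prod_zimin_sq _ _ _ hz hc i
  obtain ⟨j, hkj, hjn, hj⟩ := h.2.resolve_left hX
  by_cases hfreeze : ∃ j' < i, ζ (k + 1 + j') = ω k
  · obtain ⟨j', hj', hζj'⟩ := hfreeze
    refine sq_eq_one_of_mem_zpowers aPerm_sq (Subgroup.mul_mem _ (xLeft_mem_zpowers ω X k)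
      (prod_zimin_mem _ _ _ _ hz hc (fun l => xLeft_mem_zpowers ω l k) hj' ?_))
    simp only [xLeft]
    exact if_pos hζj'.symm
  · push Not at hfreeze
    rw [xLeft, if_neg hX, mul_prod_zimin _ _ _ aPerm fun j' hj' => if_neg (hfreeze j' hj').symm,
      ← pow_mul, ← pow_succ]
    have horder := aPerm_mul_xPerm_pow_two_pow ω (ζ k) (m := k + 1) (r := j - (k + 1))
      (by rwa [Nat.add_sub_cancel' hkj])
    obtain ⟨d, hd⟩ := pow_dvd_pow 2 (show j - (k + 1) + 2 ≤ i + 1 by omega)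
    rw [hd, pow_mul, horder, one_pow]

lemma towerElt_sq_mem_rist {n : ℕ} (h : ∀ j < n, AdmissibleLetter ω X n j (ζ j)) {k i : ℕ}
    (hki : k + i = n) : towerElt ω ζ X k i ^ 2 ∈ rist (List.replicate i true) := by
  induction i generalizing k with
  | zero => exact fun u hu => (hu List.nil_prefix).elim
  | succ i ih =>
    have hk := h k (by omega)
    rw [← hki, ← Nat.add_assoc] at hk
    rw [towerElt_succ ω ζ X hk.1 i, pairPerm_pow, towerLeft_sq ω ζ X hk, List.replicate_succ]
    exact pairPerm_one_mem_rist (ih (by omega))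

lemma towerElt_sq_ne_one {k i : ℕ} (hζ : ∀ j, k ≤ j → j < k + i → ζ j ≠ ω j)
    (hX : ∃ m, k + i < m ∧ ω m ≠ X) : towerElt ω ζ X k i ^ 2 ≠ 1 := by
  induction i generalizing k with
  | zero => simpa [towerElt, zimin, genPerm, Gen.interp] using xPerm_mul_aPerm_sq_ne_one ω X hX
  | succ i ih =>
    rw [towerElt_succ ω ζ X (hζ k le_rfl (by omega)) i, pairPerm_pow, Ne, pairPerm_eq_one_iff,
      not_and_or]
    exact Or.inr (ih (fun j hj hj' => hζ j (by omega) (by omega))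
      (hX.imp fun m hm => ⟨by omega, hm.2⟩))

lemma exists_word_towerElt_sq (n : ℕ) : ∃ w : List Gen,
    w.length ≤ 2 ^ (n + 2) ∧ (w.map (genPerm ω 0)).prod = towerElt ω ζ X 0 n ^ 2 := by
  refine ⟨(Gen.x X :: zimin (fun j => ζ (0 + j)) n) ++ (Gen.x X :: zimin (fun j => ζ (0 + j)) n),
    ?_, by rw [List.map_append, List.prod_append, sq]; rfl⟩
  have := length_zimin (fun j => ζ (0 + j)) n
  simp only [List.length_append, List.length_cons, pow_succ] at this ⊢
  omega

end tower

lemma exists_admissibleLetter (ω : ℕ → GLetter) (n : ℕ) :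
    ∃ ζ : ℕ → GLetter, ∀ k < n, AdmissibleLetter ω (ω (n - 1)) n k (ζ k) := by
  have : ∀ k, ∃ z, k < n → AdmissibleLetter ω (ω (n - 1)) n k z := by
    intro k
    by_cases hvar : ∃ j, k < j ∧ j < n ∧ ω j ≠ ω k
    · obtain ⟨j, hkj, hjn, hj⟩ := hvar
      exact ⟨ω j, fun _ => ⟨hj, Or.inr ⟨j, hkj, hjn, rfl⟩⟩⟩
    · push Not at hvar
      obtain ⟨z, hz⟩ : ∃ z, z ≠ ω k := by
        cases ω k
        exacts [⟨.c, nofun⟩, ⟨.b, nofun⟩, ⟨.b, nofun⟩]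
      refine ⟨z, fun hk => ⟨hz, Or.inl ?_⟩⟩
      rcases (show k = n - 1 ∨ k < n - 1 by omega) with h | h
      · rw [h]
      · exact (hvar (n - 1) h (by omega)).symm
  choose ζ hζ using this
  exact ⟨ζ, hζ⟩

end GeneralizedGrigorchuk

open GeneralizedGrigorchuk

/-- If `ω` is not eventually constant, then for each `n` the rigid stabilizer
`Rist(1^n) ∩ 𝔾_ω` contains a nontrivial element of word length at most `2^{n+2}`
with respect to the generators `(a, b₀, c₀, d₀)` (which are involutions). -/
theorem stmt18 (ω : ℕ → GLetter)
    (hω : ¬ ∃ (x : GLetter) (N : ℕ), ∀ m ≥ N, ω m = x) (n : ℕ) :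
    ∃ t : Equiv.Perm (List Bool), t ∈ Grig ω ∧ t ≠ 1 ∧
      (∀ u : List Bool, ¬ (List.replicate n true <+: u) → t u = u) ∧
      ∃ l : List (Equiv.Perm (List Bool)), l.length ≤ 2 ^ (n + 2) ∧
        (∀ g ∈ l, g ∈ ({aPerm, xPerm ω GLetter.b 0, xPerm ω GLetter.c 0,
          xPerm ω GLetter.d 0} : Set (Equiv.Perm (List Bool)))) ∧
        l.prod = t := by
  obtain ⟨ζ, hζ⟩ := exists_admissibleLetter ω n
  set X := ω (n - 1)
  have hX : ∃ m, 0 + n < m ∧ ω m ≠ X := by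
    push Not at hω
    obtain ⟨m, hm, hne⟩ := hω X (n + 1)
    exact ⟨m, by omega, hne⟩
  obtain ⟨w, hlen, hprod⟩ := exists_word_towerElt_sq ω ζ X n
  have hgen : ∀ g ∈ w.map (genPerm ω 0), g ∈ ({aPerm, xPerm ω GLetter.b 0,
      xPerm ω GLetter.c 0, xPerm ω GLetter.d 0} : Set (Perm (List Bool))) := by
    simp only [List.mem_map]
    rintro _ ⟨s, -, rfl⟩
    exact genPerm_zero_mem ω s
  refine ⟨_, ?_, towerElt_sq_ne_one ω ζ X (fun j _ hj => (hζ j (by omega)).1) hX,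
    towerElt_sq_mem_rist ω ζ X hζ (zero_add n), _, (List.length_map _).trans_le hlen, hgen, hprod⟩
  rw [← hprod]
  exact Subgroup.list_prod_mem (K := Grig ω) fun g hg => Subgroup.subset_closure (hgen g hg)
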